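/- arXiv:1711.04415 — 10 statements merged into one kernel-verified Lean document; each statement's English description precedes it below -/
import Mathlib

section
/- Let n ≥ 2 and let ρ be an n-qubit density matrix, i.e. a Hermitian positive-semidefinite matrix of trace 1 indexed by (Fin n → Fin 2). Let R be its generalized R-matrix, the real 3^{n-1} × 3 matrix with entries R(I, j) = Re Tr(ρ · σ_{i₁}⊗⋯⊗σ_{i_{n-1}}⊗σ_j) for multi-indices I = (i₁,…,i_{n-1}) ∈ {1,2,3}^{n-1} and j ∈ {1,2,3}, and let u₁² ≥ u₂² ≥ u₃² denote the three eigenvalues of the positive-semidefinite 3×3 matrix RᵀR. Then for every n-qubit Bell operator B_n, one has Re Tr(ρ · B_n) ≤ 2√(u₁² + u₂²). -/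
/-! Expanding each local observable in the Pauli basis turns each of the two terms of
`Re Tr(ρ B)` into `⟨b₁ ⊗ ⋯ ⊗ b_{n-1}, R c⟩` with `b = a` or `a'` and `c = a_n ± a_n'`;
since a tensor product of unit vectors is a unit vector, Cauchy–Schwarz bounds it by
`√(cᵀ RᵀR c)`. The vectors `x = a_n + a_n'` and `y = a_n - a_n'` are orthogonal with
`|x|² + |y|² = 4`. In an eigenbasis of `M = RᵀR` the weights `|y|² x_i² + |x|² y_i²` lie in
`[0, |x|²|y|²]` (Bessel) and sum to `2 |x|²|y|²`; as the eigenvalues are at least `u₃²` and sum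
to `u₁² + u₂² + u₃²`, this gives `|y|² xᵀMx + |x|² yᵀMy ≤ |x|²|y|² (u₁² + u₂²)`, and one more
Cauchy–Schwarz gives `√(xᵀMx) + √(yᵀMy) ≤ √((|x|² + |y|²)(u₁² + u₂²)) = 2 √(u₁² + u₂²)`. -/

open Matrix Complex Polynomial
open scoped ComplexOrder

noncomputable section

/-- The three Pauli matrices σ_x, σ_y, σ_z. -/
def pauli : Fin 3 → Matrix (Fin 2) (Fin 2) ℂ :=
  ![!![0, 1; 1, 0], !![0, -Complex.I; Complex.I, 0], !![1, 0; 0, -1]]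

/-- Kronecker product of `n` 2×2 matrices, as a matrix on `(Fin n → Fin 2)`. -/
def kron {n : ℕ} (M : Fin n → Matrix (Fin 2) (Fin 2) ℂ) :
    Matrix (Fin n → Fin 2) (Fin n → Fin 2) ℂ :=
  Matrix.of fun f g => ∏ k, M k (f k) (g k)

/-- The operator a¹σ_x + a²σ_y + a³σ_z associated to a vector a ∈ ℝ³. -/
def opOf (a : Fin 3 → ℝ) : Matrix (Fin 2) (Fin 2) ℂ :=
  ∑ i, (a i : ℂ) • pauli i

/-- `B` is an `n`-qubit Bell operator:
`B = A₁⊗⋯⊗A_{n-1}⊗(A_n + A_n′) + A₁′⊗⋯⊗A_{n-1}′⊗(A_n − A_n′)`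
for unit vectors `a k`, `a' k` in ℝ³. -/
def IsBellOp (n : ℕ) (B : Matrix (Fin n → Fin 2) (Fin n → Fin 2) ℂ) : Prop :=
  ∃ a a' : Fin n → Fin 3 → ℝ,
    (∀ k, ∑ i, (a k i) ^ 2 = 1) ∧ (∀ k, ∑ i, (a' k i) ^ 2 = 1) ∧
    B = kron (fun k => if (k : ℕ) = n - 1 then opOf (a k) + opOf (a' k) else opOf (a k))
      + kron (fun k => if (k : ℕ) = n - 1 then opOf (a k) - opOf (a' k) else opOf (a' k))

/-- The generalized R-matrix of an `n`-qubit density matrix: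
`R(I, j) = Re Tr(ρ · σ_{i₁}⊗⋯⊗σ_{i_{n-1}}⊗σ_j)`. -/
def Rmat {n : ℕ} (ρ : Matrix (Fin n → Fin 2) (Fin n → Fin 2) ℂ)
    (I : Fin (n - 1) → Fin 3) (j : Fin 3) : ℝ :=
  (Matrix.trace (ρ * kron fun k =>
    if h : (k : ℕ) < n - 1 then pauli (I ⟨k, h⟩) else pauli j)).re

/-- The 3×3 matrix `RᵀR` built from the generalized R-matrix. -/
def RtR {n : ℕ} (ρ : Matrix (Fin n → Fin 2) (Fin n → Fin 2) ℂ) :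
    Matrix (Fin 3) (Fin 3) ℝ :=
  Matrix.of fun j j' => ∑ I : Fin (n - 1) → Fin 3, Rmat ρ I j * Rmat ρ I j'

lemma sqrt_add_sqrt_le_sqrt_mul {A B P Q s : ℝ} (hA : 0 ≤ A) (hB : 0 ≤ B) (hP : 0 ≤ P)
    (hQ : 0 ≤ Q) (hAP : A ≤ s * P) (hBQ : B ≤ s * Q) (h : Q * A + P * B ≤ P * Q * s) :
    √A + √B ≤ √((P + Q) * s) := by
  apply Real.le_sqrt_of_sq_le
  have ha := Real.sq_sqrt hA
  have hb := Real.sq_sqrt hB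
  have ha0 := Real.sqrt_nonneg A
  have hb0 := Real.sqrt_nonneg B
  rcases hP.eq_or_lt with rfl | hP
  · have : A = 0 := le_antisymm (by simpa using hAP) hA
    simp only [this, Real.sqrt_zero, zero_add]
    nlinarith
  rcases hQ.eq_or_lt with rfl | hQ
  · have : B = 0 := le_antisymm (by simpa using hBQ) hB
    simp only [this, Real.sqrt_zero, add_zero]
    nlinarith
  rw [← ha, ← hb] at h
  have key : P * Q * (√A + √B) ^ 2 ≤ P * Q * ((P + Q) * s) := by
    nlinarith [sq_nonneg (√A * Q - √B * P),
      mul_le_mul_of_nonneg_left h (by positivity : 0 ≤ P + Q)]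
  exact le_of_mul_le_mul_left key (mul_pos hP hQ)

section
variable {ι : Type*} [Fintype ι] [DecidableEq ι]

lemma sq_mul_dotProduct_add_sq_mul_dotProduct_le {d e : ι → ℝ} (hde : d ⬝ᵥ e = 0) (i : ι) :
    d i ^ 2 * (e ⬝ᵥ e) + e i ^ 2 * (d ⬝ᵥ d) ≤ (d ⬝ᵥ d) * (e ⬝ᵥ e) := by
  have split (f g : ι → ℝ) : f ⬝ᵥ g = f i * g i + ∑ j ∈ Finset.univ.erase i, f j * g j :=
    (Finset.add_sum_erase _ _ (Finset.mem_univ i)).symm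
  have cs := Finset.sum_mul_sq_le_sq_mul_sq (Finset.univ.erase i) d e
  simp only [sq] at cs ⊢
  rw [split] at hde
  rw [split d d, split e e]
  have hcross : (d i * e i) * (d i * e i) ≤ (∑ j ∈ Finset.univ.erase i, d j * d j) *
      ∑ j ∈ Finset.univ.erase i, e j * e j := by
    rwa [show d i * e i = -∑ j ∈ Finset.univ.erase i, d j * e j by linarith, neg_mul_neg]
  linarith

lemma sum_mul_sq_add_sum_mul_sq_le {d e : ι → ℝ} (hde : d ⬝ᵥ e = 0) {lam : ι → ℝ} {μ : ℝ}
    (hμ : ∀ i, μ ≤ lam i) :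
    (e ⬝ᵥ e) * ∑ i, lam i * d i ^ 2 + (d ⬝ᵥ d) * ∑ i, lam i * e i ^ 2
      ≤ (d ⬝ᵥ d) * (e ⬝ᵥ e) * (∑ i, lam i - (Fintype.card ι - 2) * μ) := by
  set P := d ⬝ᵥ d
  set Q := e ⬝ᵥ e
  have hP : P = ∑ i, d i ^ 2 := by simp only [P, dotProduct, sq]
  have hQ : Q = ∑ i, e i ^ 2 := by simp only [Q, dotProduct, sq]
  calc _ = ∑ i, lam i * (d i ^ 2 * Q + e i ^ 2 * P) := by
          simp only [Finset.mul_sum, ← Finset.sum_add_distrib]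
          exact Finset.sum_congr rfl fun i _ => by ring
    _ ≤ ∑ i, ((lam i - μ) * (P * Q) + μ * (d i ^ 2 * Q + e i ^ 2 * P)) :=
        Finset.sum_le_sum fun i _ => by
          have := mul_nonneg (sub_nonneg.2 (hμ i))
            (sub_nonneg.2 (sq_mul_dotProduct_add_sq_mul_dotProduct_le hde i))
          linarith
    _ = _ := by
          simp only [Finset.sum_add_distrib, ← Finset.mul_sum, ← Finset.sum_mul,
            Finset.sum_sub_distrib, Finset.sum_const, Finset.card_univ, nsmul_eq_mul, ← hP, ← hQ]
          ring

namespace Matrix.IsHermitian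
variable {M : Matrix ι ι ℝ} (hM : M.IsHermitian)

lemma dotProduct_star_eigenvectorUnitary_mulVec (x y : ι → ℝ) :
    (star (hM.eigenvectorUnitary : Matrix ι ι ℝ) *ᵥ x) ⬝ᵥ
      (star (hM.eigenvectorUnitary : Matrix ι ι ℝ) *ᵥ y) = x ⬝ᵥ y := by
  rw [star_eq_conjTranspose, conjTranspose_eq_transpose_of_trivial, mulVec_transpose,
    ← dotProduct_mulVec, mulVec_mulVec, ← conjTranspose_eq_transpose_of_trivial,
    ← star_eq_conjTranspose, Unitary.mul_star_self_of_mem hM.eigenvectorUnitary.2, one_mulVec]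

lemma dotProduct_mulVec_eq_sum_eigenvalues (x : ι → ℝ) :
    x ⬝ᵥ M *ᵥ x = ∑ i, hM.eigenvalues i *
      (star (hM.eigenvectorUnitary : Matrix ι ι ℝ) *ᵥ x) i ^ 2 := by
  conv_lhs => rw [hM.spectral_theorem]
  simp only [Unitary.conjStarAlgAut_apply, ← mulVec_mulVec]
  rw [dotProduct_mulVec, ← mulVec_transpose, ← conjTranspose_eq_transpose_of_trivial,
    ← star_eq_conjTranspose, dotProduct]
  exact Finset.sum_congr rfl fun i _ => by simp [mulVec_diagonal]; ring

lemma dotProduct_mulVec_le {ν : ℝ} (hν : ∀ i, hM.eigenvalues i ≤ ν) (x : ι → ℝ) :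
    x ⬝ᵥ M *ᵥ x ≤ ν * (x ⬝ᵥ x) := by
  rw [hM.dotProduct_mulVec_eq_sum_eigenvalues,
    ← hM.dotProduct_star_eigenvectorUnitary_mulVec x x, dotProduct, Finset.mul_sum]
  exact Finset.sum_le_sum fun i _ => by
    rw [← sq]
    exact mul_le_mul_of_nonneg_right (hν i) (sq_nonneg _)

lemma dotProduct_mulVec_add_dotProduct_mulVec_le {μ : ℝ} (hμ : ∀ i, μ ≤ hM.eigenvalues i)
    {x y : ι → ℝ} (hxy : x ⬝ᵥ y = 0) :
    (y ⬝ᵥ y) * (x ⬝ᵥ M *ᵥ x) + (x ⬝ᵥ x) * (y ⬝ᵥ M *ᵥ y)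
      ≤ (x ⬝ᵥ x) * (y ⬝ᵥ y) * (M.trace - (Fintype.card ι - 2) * μ) := by
  rw [← hM.dotProduct_star_eigenvectorUnitary_mulVec x y] at hxy
  rw [hM.dotProduct_mulVec_eq_sum_eigenvalues, hM.dotProduct_mulVec_eq_sum_eigenvalues,
    ← hM.dotProduct_star_eigenvectorUnitary_mulVec x x,
    ← hM.dotProduct_star_eigenvectorUnitary_mulVec y y, hM.trace_eq_sum_eigenvalues]
  exact sum_mul_sq_add_sum_mul_sq_le hxy hμ

lemma eigenvalues_multiset_eq {u₁ u₂ u₃ : ℝ}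
    (hchar : M.charpoly = (X - C u₁) * (X - C u₂) * (X - C u₃)) :
    Finset.univ.val.map hM.eigenvalues = {u₁, u₂, u₃} := by
  have := hM.roots_charpoly_eq_eigenvalues
  rw [hchar] at this
  simpa [roots_mul, X_sub_C_ne_zero] using this.symm
end Matrix.IsHermitian
end

lemma sqrt_add_sqrt_le_of_charpoly {M : Matrix (Fin 3) (Fin 3) ℝ} (hM : M.PosSemidef)
    {u₁ u₂ u₃ : ℝ} (h12 : u₂ ≤ u₁) (h23 : u₃ ≤ u₂)
    (hchar : M.charpoly = (X - C u₁) * (X - C u₂) * (X - C u₃))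
    {x y : Fin 3 → ℝ} (hxy : x ⬝ᵥ y = 0) :
    √(x ⬝ᵥ M *ᵥ x) + √(y ⬝ᵥ M *ᵥ y) ≤ √((x ⬝ᵥ x + y ⬝ᵥ y) * (u₁ + u₂)) := by
  have hspec := hM.isHermitian.eigenvalues_multiset_eq hchar
  have hmem (i : Fin 3) : hM.isHermitian.eigenvalues i = u₁ ∨
      hM.isHermitian.eigenvalues i = u₂ ∨ hM.isHermitian.eigenvalues i = u₃ := by
    simpa [hspec] using
      Multiset.mem_map_of_mem hM.isHermitian.eigenvalues (Finset.mem_univ_val i)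
  have hu₃ : 0 ≤ u₃ := by
    have : u₃ ∈ Finset.univ.val.map hM.isHermitian.eigenvalues := hspec ▸ by simp
    obtain ⟨i, -, hi⟩ := Multiset.mem_map.1 this
    exact hi ▸ hM.eigenvalues_nonneg i
  have htrace : M.trace = u₁ + u₂ + u₃ := by
    rw [hM.isHermitian.trace_eq_sum_eigenvalues]
    simpa [hspec, add_assoc] using
      Finset.sum_eq_multiset_sum Finset.univ hM.isHermitian.eigenvalues
  have hlow (i : Fin 3) : u₃ ≤ hM.isHermitian.eigenvalues i := by
    rcases hmem i with h | h | h <;> linarith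
  have hhigh (i : Fin 3) : hM.isHermitian.eigenvalues i ≤ u₁ := by
    rcases hmem i with h | h | h <;> linarith
  have hnonneg (v : Fin 3 → ℝ) : 0 ≤ v ⬝ᵥ M *ᵥ v := by
    simpa using hM.dotProduct_mulVec_nonneg v
  have hsq (v : Fin 3 → ℝ) : 0 ≤ v ⬝ᵥ v := by simpa using dotProduct_star_self_nonneg v
  have hup (v : Fin 3 → ℝ) : v ⬝ᵥ M *ᵥ v ≤ (u₁ + u₂) * (v ⬝ᵥ v) := by
    nlinarith [hM.isHermitian.dotProduct_mulVec_le hhigh v, hsq v]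
  refine sqrt_add_sqrt_le_sqrt_mul (hnonneg x) (hnonneg y) (hsq x) (hsq y) (hup x) (hup y) ?_
  have := hM.isHermitian.dotProduct_mulVec_add_dotProduct_mulVec_le hlow hxy
  rw [htrace, Fintype.card_fin] at this
  convert this using 2
  norm_num

lemma opOf_add (x y : Fin 3 → ℝ) : opOf (x + y) = opOf x + opOf y := by
  simp only [opOf, Pi.add_apply, ofReal_add, add_smul, Finset.sum_add_distrib]

lemma opOf_sub (x y : Fin 3 → ℝ) : opOf (x - y) = opOf x - opOf y := by
  simp only [opOf, Pi.sub_apply, ofReal_sub, sub_smul, Finset.sum_sub_distrib]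

lemma kron_opOf {m : ℕ} (b : Fin m → Fin 3 → ℝ) :
    kron (fun k => opOf (b k))
      = ∑ I : Fin m → Fin 3, (∏ k, (b k (I k) : ℂ)) • kron (fun k => pauli (I k)) := by
  ext f g
  simp only [kron, opOf, of_apply, Matrix.sum_apply, Matrix.smul_apply, smul_eq_mul,
    Fintype.prod_sum, Finset.prod_mul_distrib]

lemma re_trace_mul_kron_opOf {m : ℕ} (ρ : Matrix (Fin m → Fin 2) (Fin m → Fin 2) ℂ)
    (b : Fin m → Fin 3 → ℝ) :
    (trace (ρ * kron fun k => opOf (b k))).re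
      = ∑ I : Fin m → Fin 3, (∏ k, b k (I k)) * (trace (ρ * kron fun k => pauli (I k))).re := by
  simp only [kron_opOf, Matrix.mul_sum, Matrix.mul_smul, trace_sum, trace_smul, re_sum,
    smul_eq_mul, ← ofReal_prod, re_ofReal_mul]

lemma re_trace_mul_kron_pauli_snoc {m : ℕ}
    (ρ : Matrix (Fin (m + 1) → Fin 2) (Fin (m + 1) → Fin 2) ℂ) (J : Fin m → Fin 3) (j : Fin 3) :
    (trace (ρ * kron fun k => pauli (Fin.snoc (α := fun _ => Fin 3) J j k))).re = Rmat ρ J j := by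
  unfold Rmat
  congr 4
  funext k
  by_cases h : (k : ℕ) < m
  · simp [Fin.snoc, h, Fin.castLT]
  · simp [Fin.snoc, h]

lemma sum_fin_succ_pi_eq_sum_snoc {M : Type*} [AddCommMonoid M] {α : Type*} [Fintype α] {m : ℕ}
    (F : (Fin (m + 1) → α) → M) :
    ∑ I, F I = ∑ J : Fin m → α, ∑ j, F (Fin.snoc J j) := by
  rw [← (Fin.snocEquiv fun _ => α).sum_comp, Fintype.sum_prod_type, Finset.sum_comm]
  rfl

lemma re_trace_mul_kron_snoc_opOf {m : ℕ}
    (ρ : Matrix (Fin (m + 1) → Fin 2) (Fin (m + 1) → Fin 2) ℂ) (b : Fin m → Fin 3 → ℝ)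
    (c : Fin 3 → ℝ) :
    (trace (ρ * kron (Fin.snoc (fun k => opOf (b k)) (opOf c)))).re
      = (fun J => ∏ k, b k (J k)) ⬝ᵥ (of (Rmat ρ) *ᵥ c) := by
  rw [show Fin.snoc (fun k => opOf (b k)) (opOf c)
      = fun k => opOf (Fin.snoc (α := fun _ => Fin 3 → ℝ) b c k) from
        (Fin.comp_snoc opOf b c).symm,
    re_trace_mul_kron_opOf, sum_fin_succ_pi_eq_sum_snoc]
  refine Finset.sum_congr rfl fun J _ => ?_
  simp only [Fin.prod_univ_castSucc, Fin.snoc_castSucc, Fin.snoc_last,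
    re_trace_mul_kron_pauli_snoc, mulVec, dotProduct, of_apply, Finset.mul_sum]
  exact Finset.sum_congr rfl fun j _ => by ring

lemma RtR_eq_transpose_mul {n : ℕ} (ρ : Matrix (Fin n → Fin 2) (Fin n → Fin 2) ℂ) :
    RtR ρ = (of (Rmat ρ))ᵀ * of (Rmat ρ) := by
  ext j j'
  simp [RtR, mul_apply]

lemma posSemidef_RtR {n : ℕ} (ρ : Matrix (Fin n → Fin 2) (Fin n → Fin 2) ℂ) :
    (RtR ρ).PosSemidef := by
  simpa [RtR_eq_transpose_mul, conjTranspose_eq_transpose_of_trivial] using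
    posSemidef_conjTranspose_mul_self (of (Rmat ρ))

lemma dotProduct_RtR_mulVec {n : ℕ} (ρ : Matrix (Fin n → Fin 2) (Fin n → Fin 2) ℂ)
    (c : Fin 3 → ℝ) : c ⬝ᵥ RtR ρ *ᵥ c = (of (Rmat ρ) *ᵥ c) ⬝ᵥ (of (Rmat ρ) *ᵥ c) := by
  rw [RtR_eq_transpose_mul, ← mulVec_mulVec, dotProduct_mulVec, vecMul_transpose]

lemma re_trace_mul_kron_snoc_opOf_le {m : ℕ}
    (ρ : Matrix (Fin (m + 1) → Fin 2) (Fin (m + 1) → Fin 2) ℂ) {b : Fin m → Fin 3 → ℝ}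
    (hb : ∀ k, ∑ i, b k i ^ 2 = 1) (c : Fin 3 → ℝ) :
    (trace (ρ * kron (Fin.snoc (fun k => opOf (b k)) (opOf c)))).re ≤ √(c ⬝ᵥ RtR ρ *ᵥ c) := by
  have hunit : ∑ J : Fin m → Fin 3, (∏ k, b k (J k)) ^ 2 = 1 := calc
    _ = ∑ J : Fin m → Fin 3, ∏ k, b k (J k) ^ 2 := by simp only [Finset.prod_pow]
    _ = ∏ k, ∑ i, b k i ^ 2 := (Fintype.prod_sum fun k i => b k i ^ 2).symm
    _ = 1 := by simp [hb]
  -- `Rmat ρ` is indexed by `Fin (m + 1 - 1) → Fin 3`, which is `Fin m → Fin 3` only up to defeq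
  have hcs := Real.sum_mul_le_sqrt_mul_sqrt (ι := Fin m → Fin 3) Finset.univ
    (fun J => ∏ k, b k (J k)) (of (Rmat ρ) *ᵥ c)
  rw [hunit, Real.sqrt_one, one_mul] at hcs
  rw [re_trace_mul_kron_snoc_opOf, dotProduct_RtR_mulVec]
  simpa [dotProduct, sq] using hcs

lemma ite_val_eq_snoc {α : Type*} {m : ℕ} (F G : Fin (m + 1) → α) :
    (fun k : Fin (m + 1) => if (k : ℕ) = m then F k else G k)
      = Fin.snoc (fun k => G k.castSucc) (F (Fin.last m)) := by
  funext k
  refine Fin.lastCases ?_ (fun i => ?_) k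
  · simp
  · simp [i.isLt.ne]

theorem bell_upper_bound_general (n : ℕ) (hn : 2 ≤ n)
    (ρ : Matrix (Fin n → Fin 2) (Fin n → Fin 2) ℂ)
    (u₁sq u₂sq u₃sq : ℝ) (h12 : u₂sq ≤ u₁sq) (h23 : u₃sq ≤ u₂sq)
    (hchar : (RtR ρ).charpoly =
      (X - C u₁sq) * (X - C u₂sq) * (X - C u₃sq))
    (B : Matrix (Fin n → Fin 2) (Fin n → Fin 2) ℂ) (hB : IsBellOp n B) :
    (Matrix.trace (ρ * B)).re ≤ 2 * Real.sqrt (u₁sq + u₂sq) := by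
  obtain ⟨m, rfl⟩ : ∃ m, n = m + 1 := ⟨n - 1, by omega⟩
  obtain ⟨a, a', ha, ha', rfl⟩ := hB
  set x := a (Fin.last m) + a' (Fin.last m)
  set y := a (Fin.last m) - a' (Fin.last m)
  have hunit (v : Fin 3 → ℝ) (hv : ∑ i, v i ^ 2 = 1) : v ⬝ᵥ v = 1 := by
    simpa [dotProduct, sq] using hv
  have hxy : x ⬝ᵥ y = 0 := by
    simp only [x, y, add_dotProduct, dotProduct_sub, hunit _ (ha _), hunit _ (ha' _),
      dotProduct_comm (a' _)]
    ring
  have hnorm : x ⬝ᵥ x + y ⬝ᵥ y = 4 := by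
    simp only [x, y, add_dotProduct, dotProduct_add, sub_dotProduct, dotProduct_sub,
      hunit _ (ha _), hunit _ (ha' _), dotProduct_comm (a' _)]
    ring
  simp only [Nat.add_sub_cancel, ite_val_eq_snoc, ← opOf_add, ← opOf_sub, Matrix.mul_add,
    trace_add, add_re]
  calc _ ≤ √(x ⬝ᵥ RtR ρ *ᵥ x) + √(y ⬝ᵥ RtR ρ *ᵥ y) :=
        add_le_add (re_trace_mul_kron_snoc_opOf_le ρ (fun k => ha k.castSucc) x)
          (re_trace_mul_kron_snoc_opOf_le ρ (fun k => ha' k.castSucc) y)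
    _ ≤ √((x ⬝ᵥ x + y ⬝ᵥ y) * (u₁sq + u₂sq)) :=
        sqrt_add_sqrt_le_of_charpoly (posSemidef_RtR ρ) h12 h23 hchar hxy
    _ = 2 * √(u₁sq + u₂sq) := by
        rw [hnorm, Real.sqrt_mul (by norm_num), show (4 : ℝ) = 2 ^ 2 by norm_num,
          Real.sqrt_sq (by norm_num)]

/-- For every `n`-qubit density matrix `ρ` (`n ≥ 2`) and every `n`-qubit Bell operator `B`,
`Re Tr(ρ·B) ≤ 2√(u₁² + u₂²)`, where `u₁² ≥ u₂² ≥ u₃²` are the eigenvalues of `RᵀR`. -/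
theorem bell_upper_bound (n : ℕ) (hn : 2 ≤ n)
    (ρ : Matrix (Fin n → Fin 2) (Fin n → Fin 2) ℂ)
    (hρ : ρ.PosSemidef) (htr : Matrix.trace ρ = 1)
    (u₁sq u₂sq u₃sq : ℝ) (h12 : u₂sq ≤ u₁sq) (h23 : u₃sq ≤ u₂sq)
    (hchar : (RtR ρ).charpoly =
      (X - C u₁sq) * (X - C u₂sq) * (X - C u₃sq))
    (B : Matrix (Fin n → Fin 2) (Fin n → Fin 2) ℂ) (hB : IsBellOp n B) :
    (Matrix.trace (ρ * B)).re ≤ 2 * Real.sqrt (u₁sq + u₂sq) :=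
  bell_upper_bound_general n hn ρ u₁sq u₂sq u₃sq h12 h23 hchar B hB
end
end

section
/- For the seven-qubit state |ψ⟩₇ with real coefficients α₁, α₂, α₃, α₄ satisfying α₁²+α₂²+α₃²+α₄² = 1, the purity of region A satisfies Tr(ρ_A²) = (α₁² + α₃²)² + (α₂² + α₄²)². -/
/-!
Each of the four basis strings of `|ψ⟩₇` is determined by its first six bits. Hence in the
partial trace over those six qubits two different basis strings never meet, all cross terms
vanish, and `ρ_A` is diagonal: its entry at `a` is the sum of `αᵢ²` over the strings whose last
bit is `a`, namely `α₁² + α₃²` and `α₂² + α₄²`. The purity of a diagonal matrix is the sum of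
the squares of its entries.
-/

open Matrix Complex Polynomial
open scoped ComplexOrder

noncomputable section

/-- The bit string 0000000. -/
def w₁ : Fin 7 → Fin 2 := ![0, 0, 0, 0, 0, 0, 0]
/-- The bit string 0001111. -/
def w₂ : Fin 7 → Fin 2 := ![0, 0, 0, 1, 1, 1, 1]
/-- The bit string 1111000. -/
def w₃ : Fin 7 → Fin 2 := ![1, 1, 1, 1, 0, 0, 0]
/-- The bit string 1110111. -/
def w₄ : Fin 7 → Fin 2 := ![1, 1, 1, 0, 1, 1, 1]

/-- The seven-qubit state `|ψ⟩₇ = α₁|0000000⟩ + α₂|0001111⟩ + α₃|1111000⟩ + α₄|1110111⟩`. -/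
def psi7 (α₁ α₂ α₃ α₄ : ℝ) : (Fin 7 → Fin 2) → ℂ := fun f =>
  (if f = w₁ then (α₁ : ℂ) else 0) + (if f = w₂ then (α₂ : ℂ) else 0)
    + (if f = w₃ then (α₃ : ℂ) else 0) + (if f = w₄ then (α₄ : ℂ) else 0)

/-- The density matrix `ρ(f,g) = ψ(f)·conj(ψ(g))` of `|ψ⟩₇`. -/
def rho7 (α₁ α₂ α₃ α₄ : ℝ) : Matrix (Fin 7 → Fin 2) (Fin 7 → Fin 2) ℂ :=
  Matrix.of fun f g => psi7 α₁ α₂ α₃ α₄ f * (starRingEnd ℂ) (psi7 α₁ α₂ α₃ α₄ g)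

/-- The reduced density matrix of region `A` (the seventh qubit): partial trace of
`ρ` over the first six qubits. -/
def rhoA7 (α₁ α₂ α₃ α₄ : ℝ) : Matrix (Fin 2) (Fin 2) ℂ :=
  Matrix.of fun a a' =>
    ∑ b : Fin 6 → Fin 2, rho7 α₁ α₂ α₃ α₄ (Fin.snoc b a) (Fin.snoc b a')

namespace Fin

theorem snoc_eq_iff {n : ℕ} {α : Type*} {b : Fin n → α} {a : α} {w : Fin (n + 1) → α} :
    snoc b a = w ↔ b = init w ∧ a = w (last n) := by
  conv_lhs => rw [← snoc_init_self w]
  exact snoc_inj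

end Fin

section ReducedDensity

variable {α ι : Type*} [Fintype α] [DecidableEq α] [Fintype ι] {n : ℕ}

def reducedDensityLast (ψ : (Fin (n + 1) → α) → ℂ) : Matrix α α ℂ :=
  of fun a a' => ∑ b : Fin n → α, ψ (Fin.snoc b a) * starRingEnd ℂ (ψ (Fin.snoc b a'))

theorem reducedDensityLast_eq_diagonal (w : ι → Fin (n + 1) → α)
    (hw : Function.Injective fun i => Fin.init (w i)) (c : ι → ℂ) :
    reducedDensityLast (fun f => ∑ i, if f = w i then c i else 0) =
      diagonal fun a => ∑ i, if w i (Fin.last n) = a then (normSq (c i) : ℂ) else 0 := by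
  classical
  ext a a'
  have hinit : ∀ i j, Fin.init (w i) = Fin.init (w j) ↔ i = j := fun i j => hw.eq_iff
  have hterm : ∀ i j, ∑ b : Fin n → α, (if Fin.snoc b a = w i then c i else 0) *
      starRingEnd ℂ (if Fin.snoc b a' = w j then c j else 0) =
      if i = j then
        if a = w i (Fin.last n) ∧ a' = w i (Fin.last n) then (normSq (c i) : ℂ) else 0
      else 0 := by
    intro i j
    simp only [Fin.snoc_eq_iff, ite_and, ite_mul, zero_mul, Finset.sum_ite_eq', Finset.mem_univ,
      if_true, hinit]
    by_cases hij : i = j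
    · subst hij
      split_ifs <;> simp_all [mul_conj]
    · simp [hij]
  simp only [reducedDensityLast, of_apply, map_sum, Finset.sum_mul, Finset.mul_sum]
  rw [Finset.sum_comm]
  simp only [Finset.sum_comm (γ := Fin n → α), hterm, Finset.sum_ite_eq', Finset.mem_univ,
    if_true]
  rcases eq_or_ne a a' with rfl | hne
  · simp only [diagonal_apply_eq, and_self, eq_comm (a := a)]
  · rw [diagonal_apply_ne _ hne]
    exact Finset.sum_eq_zero fun i _ => if_neg fun h => hne (h.1.trans h.2.symm)

end ReducedDensity

theorem psi7_eq_basis_sum (α₁ α₂ α₃ α₄ : ℝ) :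
    psi7 α₁ α₂ α₃ α₄ =
      fun f => ∑ i, if f = ![w₁, w₂, w₃, w₄] i then ((![α₁, α₂, α₃, α₄] i : ℝ) : ℂ) else 0 := by
  funext f
  simp only [psi7, Fin.sum_univ_four]
  rfl

theorem injective_init_w : Function.Injective fun i => Fin.init (![w₁, w₂, w₃, w₄] i) := by
  decide

theorem rhoA7_eq_diagonal (α₁ α₂ α₃ α₄ : ℝ) :
    rhoA7 α₁ α₂ α₃ α₄ = diagonal ![((α₁ ^ 2 + α₃ ^ 2 : ℝ) : ℂ), ((α₂ ^ 2 + α₄ ^ 2 : ℝ) : ℂ)] := by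
  change reducedDensityLast (psi7 α₁ α₂ α₃ α₄) = _
  rw [psi7_eq_basis_sum, reducedDensityLast_eq_diagonal _ injective_init_w]
  congr 1
  funext a
  fin_cases a <;> simp [Fin.sum_univ_four, w₁, w₂, w₃, w₄, sq]

theorem purity_rhoA7_general (α₁ α₂ α₃ α₄ : ℝ) :
    Matrix.trace (rhoA7 α₁ α₂ α₃ α₄ * rhoA7 α₁ α₂ α₃ α₄) =
      (((α₁ ^ 2 + α₃ ^ 2) ^ 2 + (α₂ ^ 2 + α₄ ^ 2) ^ 2 : ℝ) : ℂ) := by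
  rw [rhoA7_eq_diagonal, diagonal_mul_diagonal, trace_diagonal, Fin.sum_univ_two]
  push_cast
  simp [sq]

/-- For the seven-qubit state `|ψ⟩₇` with `α₁²+α₂²+α₃²+α₄² = 1`, the purity of region
`A` satisfies `Tr(ρ_A²) = (α₁² + α₃²)² + (α₂² + α₄²)²`. -/
theorem purity_rhoA7 (α₁ α₂ α₃ α₄ : ℝ)
    (hnorm : α₁ ^ 2 + α₂ ^ 2 + α₃ ^ 2 + α₄ ^ 2 = 1) :
    Matrix.trace (rhoA7 α₁ α₂ α₃ α₄ * rhoA7 α₁ α₂ α₃ α₄) =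
      (((α₁ ^ 2 + α₃ ^ 2) ^ 2 + (α₂ ^ 2 + α₄ ^ 2) ^ 2 : ℝ) : ℂ) :=
  purity_rhoA7_general α₁ α₂ α₃ α₄
end
end

section
/- Let C₁, C₂ ∈ [0,1] and set p = √(1 − C₁²), q = √(1 − C₂²). Define γ₁² = (1 − p)/2, cos²θ₂ = (p + q)/(1 + p), γ₂² = (1 − γ₁²)·(1 − cos²θ₂), and γ₃² = (1 − γ₁²)·cos²θ₂. Then cos²θ₂ ∈ [0,1], γ₁² + γ₂² + γ₃² = 1, and (γ₁² + γ₃²)² + γ₂⁴ = 1 − C₂²/2; equivalently C₂ = √(2(1 − ((γ₁² + γ₃²)² + γ₂⁴))). -/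
/-- For `C₁, C₂ ∈ [0,1]`, with `p = √(1−C₁²)`, `q = √(1−C₂²)`,
`γ₁² = (1−p)/2`, `cos²θ₂ = (p+q)/(1+p)`, `γ₂² = (1−γ₁²)(1−cos²θ₂)`,
`γ₃² = (1−γ₁²)·cos²θ₂`: then `cos²θ₂ ∈ [0,1]`, `γ₁² + γ₂² + γ₃² = 1`, and
`(γ₁² + γ₃²)² + γ₂⁴ = 1 − C₂²/2`; equivalently
`C₂ = √(2(1 − ((γ₁² + γ₃²)² + γ₂⁴)))`. -/
theorem concurrence_three_term (C₁ C₂ : ℝ)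
    (hC₁ : C₁ ∈ Set.Icc (0 : ℝ) 1) (hC₂ : C₂ ∈ Set.Icc (0 : ℝ) 1)
    (p q : ℝ) (hp : p = Real.sqrt (1 - C₁ ^ 2)) (hq : q = Real.sqrt (1 - C₂ ^ 2))
    (γ₁sq cos₂sq γ₂sq γ₃sq : ℝ)
    (hγ₁ : γ₁sq = (1 - p) / 2)
    (hcos₂ : cos₂sq = (p + q) / (1 + p))
    (hγ₂ : γ₂sq = (1 - γ₁sq) * (1 - cos₂sq))
    (hγ₃ : γ₃sq = (1 - γ₁sq) * cos₂sq) :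
    cos₂sq ∈ Set.Icc (0 : ℝ) 1 ∧
    γ₁sq + γ₂sq + γ₃sq = 1 ∧
    (γ₁sq + γ₃sq) ^ 2 + γ₂sq ^ 2 = 1 - C₂ ^ 2 / 2 ∧
    C₂ = Real.sqrt (2 * (1 - ((γ₁sq + γ₃sq) ^ 2 + γ₂sq ^ 2))) := by
  obtain ⟨hC₂0, hC₂1⟩ := hC₂
  have hp0 : 0 ≤ p := hp ▸ Real.sqrt_nonneg _
  have hq0 : 0 ≤ q := hq ▸ Real.sqrt_nonneg _
  have hq1 : q ≤ 1 := by
    rw [hq]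
    calc Real.sqrt (1 - C₂ ^ 2) ≤ Real.sqrt 1 := by
          apply Real.sqrt_le_sqrt; nlinarith
      _ = 1 := Real.sqrt_one
  have hqsq : q ^ 2 = 1 - C₂ ^ 2 := by
    rw [hq, sq, Real.mul_self_sqrt (by nlinarith [hC₂0, hC₂1])]
  have h1p : (0:ℝ) < 1 + p := by linarith
  have hγ₂' : γ₂sq = (1 - q) / 2 := by
    rw [hγ₂, hγ₁, hcos₂]; field_simp; ring
  refine ⟨⟨by rw [hcos₂]; positivity, by rw [hcos₂, div_le_one h1p]; linarith⟩,
    by rw [hγ₂, hγ₃]; ring, ?_, ?_⟩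
  · have : γ₁sq + γ₃sq = 1 - γ₂sq := by rw [hγ₂, hγ₃]; ring
    rw [this, hγ₂']; nlinarith
  · have : γ₁sq + γ₃sq = 1 - γ₂sq := by rw [hγ₂, hγ₃]; ring
    rw [this, hγ₂']
    have : 2 * (1 - ((1 - (1 - q) / 2) ^ 2 + ((1 - q) / 2) ^ 2)) = C₂ ^ 2 := by nlinarith
    rw [this, Real.sqrt_sq hC₂0]
end

section
/- Let C₁, C₂, C_A ∈ [0,1] and set p = √(1 − C₁²), q = √(1 − C₂²), r = √(1 − C_A²), with p + q > 0. Define α₁² = (1 − p)/2, α₂² = (1 − q)/2, cos²θ₃ = ((pq + p²)/(p + q) + r)/(p + q), α₃² = ((p + q)/2)·cos²θ₃, α₄² = ((p + q)/2)·(1 − cos²θ₃). If 0 ≤ cos²θ₃ ≤ 1, then α₁² + α₂² + α₃² + α₄² = 1 and (α₁² + α₃²)² + (α₂² + α₄²)² = 1 − C_A²/2; equivalently, C_A equals the concurrence √(2(1 − Tr ρ_A²)) of the seven-qubit state |ψ⟩₇ with these squared coefficients. -/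
/-- For `C₁, C₂, C_A ∈ [0,1]`, with `p = √(1−C₁²)`, `q = √(1−C₂²)`, `r = √(1−C_A²)`,
`p + q > 0`, `α₁² = (1−p)/2`, `α₂² = (1−q)/2`,
`cos²θ₃ = ((pq + p²)/(p+q) + r)/(p+q)`, `α₃² = ((p+q)/2)·cos²θ₃`,
`α₄² = ((p+q)/2)·(1 − cos²θ₃)`: if `0 ≤ cos²θ₃ ≤ 1`, then
`α₁² + α₂² + α₃² + α₄² = 1` and `(α₁² + α₃²)² + (α₂² + α₄²)² = 1 − C_A²/2`;
equivalently, `C_A` equals the concurrence `√(2(1 − Tr ρ_A²))` of the seven-qubit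
state `|ψ⟩₇` with these squared coefficients, whose purity is
`Tr ρ_A² = (α₁² + α₃²)² + (α₂² + α₄²)²`. -/
theorem concurrence_four_term (C₁ C₂ C_A : ℝ)
    (hC₁ : C₁ ∈ Set.Icc (0 : ℝ) 1) (hC₂ : C₂ ∈ Set.Icc (0 : ℝ) 1)
    (hCA : C_A ∈ Set.Icc (0 : ℝ) 1)
    (p q r : ℝ) (hp : p = Real.sqrt (1 - C₁ ^ 2)) (hq : q = Real.sqrt (1 - C₂ ^ 2))
    (hr : r = Real.sqrt (1 - C_A ^ 2)) (hpq : 0 < p + q)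
    (α₁sq α₂sq cos₃sq α₃sq α₄sq : ℝ)
    (hα₁ : α₁sq = (1 - p) / 2)
    (hα₂ : α₂sq = (1 - q) / 2)
    (hcos₃ : cos₃sq = ((p * q + p ^ 2) / (p + q) + r) / (p + q))
    (hα₃ : α₃sq = ((p + q) / 2) * cos₃sq)
    (hα₄ : α₄sq = ((p + q) / 2) * (1 - cos₃sq))
    (hcos₃mem : cos₃sq ∈ Set.Icc (0 : ℝ) 1) :
    α₁sq + α₂sq + α₃sq + α₄sq = 1 ∧
    (α₁sq + α₃sq) ^ 2 + (α₂sq + α₄sq) ^ 2 = 1 - C_A ^ 2 / 2 ∧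
    C_A = Real.sqrt (2 * (1 - ((α₁sq + α₃sq) ^ 2 + (α₂sq + α₄sq) ^ 2))) := by
  obtain ⟨hA0, hA1⟩ := hCA
  have hr2 : r ^ 2 = 1 - C_A ^ 2 := by
    rw [hr, Real.sq_sqrt]; nlinarith
  have hpqne : p + q ≠ 0 := ne_of_gt hpq
  have hc : cos₃sq = (p + r) / (p + q) := by
    rw [hcos₃]; field_simp; ring
  have h3 : α₃sq = (p + r) / 2 := by
    rw [hα₃, hc]; field_simp
  have h4 : α₄sq = (q - r) / 2 := by
    rw [hα₄, hc]; field_simp; ring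
  refine ⟨by rw [hα₁, hα₂, h3, h4]; ring, ?_, ?_⟩
  · rw [hα₁, hα₂, h3, h4]; nlinarith
  · rw [hα₁, hα₂, h3, h4]
    have key : 2 * (1 - (((1-p)/2 + (p+r)/2)^2 + ((1-q)/2 + (q-r)/2)^2)) = C_A ^ 2 := by
      nlinarith
    rw [key, Real.sqrt_sq hA0]
end

section
/- For the seven-qubit state |ψ⟩₇ with real coefficients α₁, α₂, α₃, α₄ satisfying α₁²+α₂²+α₃²+α₄² = 1, the 3×3 matrix R†R built from the generalized R-matrix of ρ = |ψ⟩₇⟨ψ|₇ is diagonal, with (R†R)₁₁ = (R†R)₂₂ = 16(α₁² + α₃²)(α₂² + α₄²) + 48(α₁²α₄² + α₂²α₃²) and (R†R)₃₃ = 1 + 32α₁²α₃² + 32α₂²α₄², and all off-diagonal entries zero. -/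
open Matrix Complex Polynomial
open scoped ComplexOrder

noncomputable section

/-- The generalized R-matrix of `ρ = |ψ⟩₇⟨ψ|₇`:
`R(I, j) = Re Tr(ρ · σ_{i₁}⊗⋯⊗σ_{i₆}⊗σ_j)`. -/
def Rmat7 (α₁ α₂ α₃ α₄ : ℝ) (I : Fin 6 → Fin 3) (j : Fin 3) : ℝ :=
  (Matrix.trace (rho7 α₁ α₂ α₃ α₄ *
    kron (Fin.snoc (fun k : Fin 6 => pauli (I k)) (pauli j)))).re

/-- The 3×3 matrix `R†R`. -/
def RtR7 (α₁ α₂ α₃ α₄ : ℝ) : Matrix (Fin 3) (Fin 3) ℝ :=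
  Matrix.of fun j j' =>
    ∑ I : Fin 6 → Fin 3, Rmat7 α₁ α₂ α₃ α₄ I j * Rmat7 α₁ α₂ α₃ α₄ I j'

/-!
The Pauli strings are Hermitian, so every expectation value `⟨ψ|σ_I ⊗ σ_j|ψ⟩` is real and
`(R†R)_{jj'}` is the real part of `∑_I ⟨ψ|σ_I ⊗ σ_j|ψ⟩⟨ψ|σ_I ⊗ σ_j'|ψ⟩`. Summed over `I`, this
product factorises qubit by qubit into the completeness relation `∑ᵢ σᵢ ⊗ σᵢ = 2·SWAP − 1`.
Hence each entry is a sum over quadruples `(a, b, a', b')` of the four basis strings of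
`α_a α_b α_a' α_b'` times six entries of `2·SWAP − 1` and the entries of `σ_j`, `σ_j'` on the
seventh qubit; evaluating these `4⁴` terms gives the stated polynomials.
-/

lemma pauli_isHermitian (i : Fin 3) : (pauli i).IsHermitian := by
  fin_cases i <;> ext x y <;> fin_cases x <;> fin_cases y <;> simp [pauli]

lemma kron_isHermitian {n : ℕ} {M : Fin n → Matrix (Fin 2) (Fin 2) ℂ}
    (hM : ∀ k, (M k).IsHermitian) : (kron M).IsHermitian := by
  ext f g
  simp only [conjTranspose_apply, kron, of_apply, star_prod]
  exact Finset.prod_congr rfl fun k _ => (hM k).apply (f k) (g k)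

/-- `∑ᵢ σᵢ ⊗ σᵢ = 2·SWAP − 1`, in components. -/
def pauliTensorSum (x y u v : Fin 2) : ℂ :=
  (if x = v ∧ y = u then 2 else 0) - (if x = y ∧ u = v then 1 else 0)

lemma sum_pauli_mul_pauli (x y u v : Fin 2) :
    ∑ i, pauli i x y * pauli i u v = pauliTensorSum x y u v := by
  fin_cases x <;> fin_cases y <;> fin_cases u <;> fin_cases v <;>
    simp [pauli, pauliTensorSum, Fin.sum_univ_three] <;> norm_num

lemma sum_prod_pauli_mul_prod_pauli {n : ℕ} (x y u v : Fin n → Fin 2) :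
    ∑ I : Fin n → Fin 3, (∏ k, pauli (I k) (x k) (y k)) * ∏ k, pauli (I k) (u k) (v k)
      = ∏ k, pauliTensorSum (x k) (y k) (u k) (v k) := by
  simp only [← sum_pauli_mul_pauli, Fintype.prod_sum, ← Finset.prod_mul_distrib]

def pauliString {n : ℕ} (I : Fin n → Fin 3) (j : Fin 3) :
    Matrix (Fin (n + 1) → Fin 2) (Fin (n + 1) → Fin 2) ℂ :=
  kron (Fin.snoc (fun k => pauli (I k)) (pauli j))

lemma pauliString_apply {n : ℕ} (I : Fin n → Fin 3) (j : Fin 3) (f g : Fin (n + 1) → Fin 2) :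
    pauliString I j f g = (∏ k, pauli (I k) (f k.castSucc) (g k.castSucc)) *
      pauli j (f (Fin.last n)) (g (Fin.last n)) := by
  simp [pauliString, kron, Fin.prod_univ_castSucc]

lemma pauliString_isHermitian {n : ℕ} (I : Fin n → Fin 3) (j : Fin 3) :
    (pauliString I j).IsHermitian := by
  refine kron_isHermitian fun k => ?_
  induction k using Fin.lastCases <;> simp [pauli_isHermitian]

lemma trace_vecMulVec_star_mul {m R : Type*} [Fintype m] [CommSemiring R] [StarRing R]
    (ψ : m → R) (K : Matrix m m R) :
    trace (vecMulVec ψ (star ψ) * K) = star ψ ⬝ᵥ K *ᵥ ψ := by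
  rw [vecMulVec_mul, trace_vecMulVec, dotProduct_comm, dotProduct_mulVec]

lemma star_dotProduct_mulVec_sum_single {m ι R : Type*} [Fintype m] [DecidableEq m] [Fintype ι]
    [CommSemiring R] [StarRing R] (w : ι → m) (c : ι → R) (K : Matrix m m R) :
    star (∑ a, Pi.single (w a) (c a)) ⬝ᵥ K *ᵥ ∑ a, Pi.single (w a) (c a)
      = ∑ a, ∑ b, star (c a) * c b * K (w a) (w b) := by
  simp only [star_sum, Pi.star_single, mulVec_sum, dotProduct_sum, sum_dotProduct,
    single_dotProduct, mulVec_single, Pi.smul_apply, col_apply, op_smul_eq_mul]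
  rw [Finset.sum_comm]
  refine Finset.sum_congr rfl fun a _ => Finset.sum_congr rfl fun b _ => ?_
  ring

lemma sum_expect_mul_expect {n : ℕ} {ι : Type*} [Fintype ι] (w : ι → Fin (n + 1) → Fin 2)
    (c : ι → ℂ) (j j' : Fin 3) :
    ∑ I : Fin n → Fin 3,
        (star (∑ a, Pi.single (w a) (c a)) ⬝ᵥ pauliString I j *ᵥ ∑ a, Pi.single (w a) (c a)) *
        (star (∑ a, Pi.single (w a) (c a)) ⬝ᵥ pauliString I j' *ᵥ ∑ a, Pi.single (w a) (c a))
      = ∑ a, ∑ b, ∑ a', ∑ b', star (c a) * c b * star (c a') * c b' *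
          ((∏ k : Fin n, pauliTensorSum (w a k.castSucc) (w b k.castSucc)
              (w a' k.castSucc) (w b' k.castSucc)) *
            (pauli j (w a (Fin.last n)) (w b (Fin.last n)) *
              pauli j' (w a' (Fin.last n)) (w b' (Fin.last n)))) := by
  simp only [star_dotProduct_mulVec_sum_single, pauliString_apply, Finset.sum_mul_sum,
    Finset.sum_comm (γ := Fin n → Fin 3)]
  simp only [← sum_prod_pauli_mul_prod_pauli, Finset.mul_sum, Finset.sum_mul]
  refine Finset.sum_congr rfl fun a _ => ?_
  rw [Finset.sum_comm]
  refine Finset.sum_congr rfl fun b _ => Finset.sum_congr rfl fun a' _ =>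
    Finset.sum_congr rfl fun b' _ => Finset.sum_congr rfl fun I _ => ?_
  ring

lemma psi7_eq_sum_single (α₁ α₂ α₃ α₄ : ℝ) :
    psi7 α₁ α₂ α₃ α₄ = ∑ a, Pi.single (![w₁, w₂, w₃, w₄] a) ((![α₁, α₂, α₃, α₄] a : ℝ) : ℂ) := by
  ext f
  simp only [psi7, Fin.sum_univ_four, Finset.sum_apply, Pi.single_apply]
  congr

lemma RtR7_apply (α₁ α₂ α₃ α₄ : ℝ) (j j' : Fin 3) :
    RtR7 α₁ α₂ α₃ α₄ j j' = (∑ I : Fin 6 → Fin 3,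
      (star (psi7 α₁ α₂ α₃ α₄) ⬝ᵥ pauliString I j *ᵥ psi7 α₁ α₂ α₃ α₄) *
      (star (psi7 α₁ α₂ α₃ α₄) ⬝ᵥ pauliString I j' *ᵥ psi7 α₁ α₂ α₃ α₄)).re := by
  have hRmat (I : Fin 6 → Fin 3) (j : Fin 3) : Rmat7 α₁ α₂ α₃ α₄ I j
      = (star (psi7 α₁ α₂ α₃ α₄) ⬝ᵥ pauliString I j *ᵥ psi7 α₁ α₂ α₃ α₄).re :=
    congrArg Complex.re (trace_vecMulVec_star_mul _ _)
  have him (I : Fin 6 → Fin 3) (j : Fin 3) :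
      (star (psi7 α₁ α₂ α₃ α₄) ⬝ᵥ pauliString I j *ᵥ psi7 α₁ α₂ α₃ α₄).im = 0 :=
    (pauliString_isHermitian I j).im_star_dotProduct_mulVec_self _
  simp [RtR7, hRmat, Complex.re_sum, Complex.mul_re, him]

/-- For the seven-qubit state `|ψ⟩₇` with `α₁²+α₂²+α₃²+α₄² = 1`, the matrix `R†R` is
diagonal with `(R†R)₁₁ = (R†R)₂₂ = 16(α₁²+α₃²)(α₂²+α₄²) + 48(α₁²α₄²+α₂²α₃²)` and
`(R†R)₃₃ = 1 + 32α₁²α₃² + 32α₂²α₄²`. -/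
theorem RtR7_diagonal (α₁ α₂ α₃ α₄ : ℝ)
    (hnorm : α₁ ^ 2 + α₂ ^ 2 + α₃ ^ 2 + α₄ ^ 2 = 1) :
    RtR7 α₁ α₂ α₃ α₄ =
      !![16 * (α₁ ^ 2 + α₃ ^ 2) * (α₂ ^ 2 + α₄ ^ 2)
           + 48 * (α₁ ^ 2 * α₄ ^ 2 + α₂ ^ 2 * α₃ ^ 2), 0, 0;
         0, 16 * (α₁ ^ 2 + α₃ ^ 2) * (α₂ ^ 2 + α₄ ^ 2)
           + 48 * (α₁ ^ 2 * α₄ ^ 2 + α₂ ^ 2 * α₃ ^ 2), 0;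
         0, 0, 1 + 32 * α₁ ^ 2 * α₃ ^ 2 + 32 * α₂ ^ 2 * α₄ ^ 2] := by
  ext j j'
  rw [RtR7_apply, psi7_eq_sum_single, sum_expect_mul_expect]
  fin_cases j <;> fin_cases j' <;>
    simp [Fin.sum_univ_four, Fin.prod_univ_six, pauliTensorSum, pauli, w₁, w₂, w₃, w₄]
  · ring
  · ring
  -- the `σ_z ⊗ σ_z` diagonal terms add up to `(α₁² + α₂² + α₃² + α₄²)²`
  · linear_combination (α₁ ^ 2 + α₂ ^ 2 + α₃ ^ 2 + α₄ ^ 2 + 1) * hnorm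
end
end

section
/- Define F : ℝ³ → ℝ by F(a,b,c) = 16(a + c)(b + d) + 48(a·d + b·c) where d = 1 − a − b − c (this is the diagonal entry (R†R)₁₁ of the seven-qubit state viewed as a function of the squared amplitudes a = α₁², b = α₂², c = α₃², d = α₄²). Then (1/4, 1/4, 1/4) is a critical point of F (the Fréchet derivative of F at (1/4,1/4,1/4) is zero), and it is a saddle point: in every neighborhood of (1/4,1/4,1/4) there exist points where F takes values strictly greater than F(1/4,1/4,1/4) = 10 and points where F takes values strictly less than 10. -/
noncomputable section

/-- `F(a,b,c) = 16(a+c)(b+d) + 48(ad+bc)` with `d = 1−a−b−c`: the diagonal entry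
`(R†R)₁₁` of the seven-qubit state, as a function of the squared amplitudes. -/
def F : ℝ × ℝ × ℝ → ℝ := fun x =>
  16 * (x.1 + x.2.2) * (x.2.1 + (1 - x.1 - x.2.1 - x.2.2))
    + 48 * (x.1 * (1 - x.1 - x.2.1 - x.2.2) + x.2.1 * x.2.2)

/-- `(1/4, 1/4, 1/4)` is a critical point of `F`, `F(1/4,1/4,1/4) = 10`, and it is a
saddle point: every neighborhood contains points with `F > 10` and points with
`F < 10`. -/
theorem critical_saddle :
    F (1/4, 1/4, 1/4) = 10 ∧
    fderiv ℝ F (1/4, 1/4, 1/4) = 0 ∧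
    (∀ ε : ℝ, 0 < ε →
      (∃ x : ℝ × ℝ × ℝ, ‖x - ((1:ℝ)/4, (1:ℝ)/4, (1:ℝ)/4)‖ < ε ∧ 10 < F x) ∧
      (∃ y : ℝ × ℝ × ℝ, ‖y - ((1:ℝ)/4, (1:ℝ)/4, (1:ℝ)/4)‖ < ε ∧ F y < 10)) := by
  refine ⟨by norm_num [F], ?_, ?_⟩
  · set p : ℝ × ℝ × ℝ := (1/4, 1/4, 1/4) with hp
    have ha : HasFDerivAt (fun x : ℝ × ℝ × ℝ => x.1) (ContinuousLinearMap.fst ℝ ℝ (ℝ × ℝ)) p :=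
      hasFDerivAt_fst
    have hb := (hasFDerivAt_snd (𝕜 := ℝ) (E := ℝ) (F := ℝ × ℝ) (p := p)).fst
    have hc := (hasFDerivAt_snd (𝕜 := ℝ) (E := ℝ) (F := ℝ × ℝ) (p := p)).snd
    have hd := (((hasFDerivAt_const (1:ℝ) p).sub ha).sub hb).sub hc
    have h1 := (ha.add hc).const_mul (16:ℝ)
    have h2 := hb.add hd
    have h3 := h1.mul h2
    have h4 := (ha.mul hd).add (hb.mul hc)
    have h5 := h3.add (h4.const_mul (48:ℝ))
    have hF : HasFDerivAt F _ p := h5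
    rw [hF.fderiv]
    apply ContinuousLinearMap.ext
    intro v
    simp [hp, ContinuousLinearMap.comp_apply]
    ring
  · intro ε hε
    constructor
    · refine ⟨(1/4, 1/4 + ε/2, 1/4 + ε/2), ?_, ?_⟩
      · simp [Prod.norm_def, abs_of_pos, hε, abs_of_nonneg hε.le]
      · simp only [F]
        nlinarith
    · refine ⟨(1/4 + ε/2, 1/4, 1/4), ?_, ?_⟩
      · simp [Prod.norm_def, abs_of_pos, hε, abs_of_nonneg hε.le]
      · simp only [F]
        nlinarith
end
end

section
/- Let H be the 2⁷×2⁷ Hamiltonian of the seven-qubit toric code model on a disk: H = −∑_{i=1}^{6} A_i − ∑_{j=1}^{2} B_j, where A₁ = σ_z⊗σ_z⊗1⊗1⊗1⊗1⊗1, A₂ = σ_z⊗1⊗σ_z⊗1⊗1⊗1⊗1, A₃ = 1⊗σ_z⊗1⊗σ_z⊗σ_z⊗1⊗1, A₄ = 1⊗1⊗σ_z⊗σ_z⊗1⊗σ_z⊗1, A₅ = 1⊗1⊗1⊗1⊗σ_z⊗1⊗σ_z, A₆ = 1⊗1⊗1⊗1⊗1⊗σ_z⊗σ_z, B₁ = σ_x⊗σ_x⊗σ_x⊗σ_x⊗1⊗1⊗1,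 B₂ = 1⊗1⊗1⊗σ_x⊗σ_x⊗σ_x⊗σ_x. Let ψ be the seven-qubit state |ψ⟩₇ with equal coefficients α₁ = α₂ = α₃ = α₄ = 1/2. Then H·ψ = −8·ψ, and ψ is a ground state: for every φ ∈ (Fin 7 → Fin 2) → ℂ, Re⟪φ, H·φ⟫ ≥ −8·‖φ‖². -/
/-
Every term of `H` is a Pauli string, a Kronecker product of unitaries and hence unitary, so each
of the eight terms contributes at least `-‖φ‖²` to `Re ⟪φ, H φ⟫`. Conversely `ψ` is a common
`+1` eigenvector of all eight terms: a `σ_z`-string multiplies `|f⟩` by `(-1)` to the parity of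
`f` on its support, which is even on the four basis strings of `ψ`, and a `σ_x`-string flips the
bits on its support, which permutes these four basis strings.
-/

open Matrix Complex Polynomial
open scoped ComplexOrder

noncomputable section

/-- σ_z. -/
def sz : Matrix (Fin 2) (Fin 2) ℂ := !![1, 0; 0, -1]
/-- σ_x. -/
def sx : Matrix (Fin 2) (Fin 2) ℂ := !![0, 1; 1, 0]
/-- 2×2 identity. -/
def id2 : Matrix (Fin 2) (Fin 2) ℂ := 1

/-- The Hamiltonian of the seven-qubit toric code model on a disk:
`H = −∑_{i=1}^{6} A_i − ∑_{j=1}^{2} B_j`. -/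
def H7td : Matrix (Fin 7 → Fin 2) (Fin 7 → Fin 2) ℂ :=
  -(kron ![sz, sz, id2, id2, id2, id2, id2]
    + kron ![sz, id2, sz, id2, id2, id2, id2]
    + kron ![id2, sz, id2, sz, sz, id2, id2]
    + kron ![id2, id2, sz, sz, id2, sz, id2]
    + kron ![id2, id2, id2, id2, sz, id2, sz]
    + kron ![id2, id2, id2, id2, id2, sz, sz])
  - (kron ![sx, sx, sx, sx, id2, id2, id2]
    + kron ![id2, id2, id2, sx, sx, sx, sx])

section Kron

variable {n : ℕ}

theorem kron_mul (M N : Fin n → Matrix (Fin 2) (Fin 2) ℂ) :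
    kron M * kron N = kron fun k => M k * N k := by
  ext f h
  simp only [kron, mul_apply, of_apply, Fintype.prod_sum, ← Finset.prod_mul_distrib]

theorem star_kron (M : Fin n → Matrix (Fin 2) (Fin 2) ℂ) :
    star (kron M) = kron fun k => star (M k) := by
  ext f g
  simp [kron, star_apply]

theorem kron_one : kron (fun _ => 1 : Fin n → Matrix (Fin 2) (Fin 2) ℂ) = 1 := by
  ext f g
  simp [kron, one_apply, Fintype.prod_boole, funext_iff]

theorem kron_mem_unitaryGroup {M : Fin n → Matrix (Fin 2) (Fin 2) ℂ}
    (hM : ∀ k, M k ∈ unitaryGroup (Fin 2) ℂ) : kron M ∈ unitaryGroup (Fin n → Fin 2) ℂ := by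
  simp only [mem_unitaryGroup_iff, star_kron, kron_mul] at hM ⊢
  simp only [hM, kron_one]

theorem kron_diagonal (d : Fin n → Fin 2 → ℂ) :
    kron (fun k => diagonal (d k)) = diagonal fun f => ∏ k, d k (f k) := by
  ext f g
  by_cases hfg : f = g
  · subst hfg
    simp [kron]
  · obtain ⟨k, hk⟩ := Function.ne_iff.mp hfg
    simp [kron, hfg, Finset.prod_eq_zero (Finset.mem_univ k), diagonal_apply_ne _ hk]

theorem kron_permMatrix (σ : Fin n → Equiv.Perm (Fin 2)) :
    kron (fun k => (σ k).permMatrix ℂ) = Equiv.Perm.permMatrix ℂ (Equiv.piCongrRight σ) := by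
  ext f g
  simp [kron, PEquiv.toMatrix_apply, Fintype.prod_boole, funext_iff]

end Kron

theorem re_star_dotProduct_mulVec_le_of_mem_unitaryGroup {ι : Type*} [Fintype ι] [DecidableEq ι]
    {U : Matrix ι ι ℂ} (hU : U ∈ unitaryGroup ι ℂ) (φ : ι → ℂ) :
    (star φ ⬝ᵥ U *ᵥ φ).re ≤ ∑ i, Complex.normSq (φ i) := by
  have hnormSq : (star φ ⬝ᵥ φ).re = ∑ i, Complex.normSq (φ i) := by
    simp [dotProduct, Complex.normSq_apply]
  have hisometry : star (U *ᵥ φ) ⬝ᵥ U *ᵥ φ = star φ ⬝ᵥ φ := by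
    rw [star_mulVec, dotProduct_mulVec, vecMul_vecMul, ← star_eq_conjTranspose,
      mem_unitaryGroup_iff'.mp hU, vecMul_one]
  have hconj : (star (U *ᵥ φ) ⬝ᵥ φ).re = (star φ ⬝ᵥ U *ᵥ φ).re := by
    rw [star_dotProduct, Complex.star_def, Complex.conj_re]
  -- `0 ≤ ‖φ - Uφ‖² = 2 ‖φ‖² - 2 Re ⟪φ, Uφ⟫`
  have hnonneg := Complex.re_le_re (dotProduct_star_self_nonneg (φ - U *ᵥ φ))
  rw [star_sub, sub_dotProduct, dotProduct_sub, dotProduct_sub, hisometry] at hnonneg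
  simp only [Complex.sub_re, Complex.zero_re, hconj] at hnonneg
  linarith

theorem sz_eq_diagonal : sz = diagonal fun i : Fin 2 => (-1) ^ (i : ℕ) := by
  ext i j
  fin_cases i <;> fin_cases j <;> simp [sz]

theorem sx_eq_permMatrix : sx = (Equiv.swap 0 1 : Equiv.Perm (Fin 2)).permMatrix ℂ := by
  ext i j
  fin_cases i <;> fin_cases j <;> simp [sx, PEquiv.toMatrix_apply]

theorem sz_mem_unitaryGroup : sz ∈ unitaryGroup (Fin 2) ℂ := by
  rw [mem_unitaryGroup_iff, star_eq_conjTranspose]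
  ext i j
  fin_cases i <;> fin_cases j <;> simp [sz, mul_apply]

theorem sx_mem_unitaryGroup : sx ∈ unitaryGroup (Fin 2) ℂ := by
  rw [mem_unitaryGroup_iff, star_eq_conjTranspose]
  ext i j
  fin_cases i <;> fin_cases j <;> simp [sx, mul_apply]

section PauliString

variable {n : ℕ}

def pauliZString (T : Finset (Fin n)) : Matrix (Fin n → Fin 2) (Fin n → Fin 2) ℂ :=
  kron fun k => if k ∈ T then sz else id2

def pauliXString (T : Finset (Fin n)) : Matrix (Fin n → Fin 2) (Fin n → Fin 2) ℂ :=
  kron fun k => if k ∈ T then sx else id2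

def flipOn (T : Finset (Fin n)) : Equiv.Perm (Fin n → Fin 2) :=
  Equiv.piCongrRight fun k => if k ∈ T then Equiv.swap 0 1 else 1

theorem flipOn_involutive (T : Finset (Fin n)) : Function.Involutive (flipOn T) := by
  intro f
  ext k
  by_cases hk : k ∈ T <;> simp [flipOn, hk]

theorem pauliZString_mulVec (T : Finset (Fin n)) (φ : (Fin n → Fin 2) → ℂ) (f : Fin n → Fin 2) :
    (pauliZString T *ᵥ φ) f = (-1) ^ (∑ k ∈ T, (f k : ℕ)) * φ f := by
  have hdiag : (fun k => if k ∈ T then sz else id2) =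
      fun k => diagonal fun i : Fin 2 => if k ∈ T then (-1 : ℂ) ^ (i : ℕ) else 1 := by
    funext k
    split_ifs <;> simp [sz_eq_diagonal, id2]
  rw [pauliZString, hdiag, kron_diagonal, mulVec_diagonal, Finset.prod_ite_mem_eq,
    Finset.prod_pow_eq_pow_sum]

theorem pauliXString_mulVec (T : Finset (Fin n)) (φ : (Fin n → Fin 2) → ℂ) :
    pauliXString T *ᵥ φ = φ ∘ flipOn T := by
  have hperm : (fun k => if k ∈ T then sx else id2) =
      fun k => (if k ∈ T then Equiv.swap 0 1 else 1 : Equiv.Perm (Fin 2)).permMatrix ℂ := by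
    funext k
    split_ifs <;> simp [sx_eq_permMatrix, id2]
  rw [pauliXString, hperm, kron_permMatrix, permMatrix_mulVec, flipOn]

theorem pauliZString_mem_unitaryGroup (T : Finset (Fin n)) :
    pauliZString T ∈ unitaryGroup (Fin n → Fin 2) ℂ :=
  kron_mem_unitaryGroup fun k => by
    split_ifs
    exacts [sz_mem_unitaryGroup, one_mem _]

theorem pauliXString_mem_unitaryGroup (T : Finset (Fin n)) :
    pauliXString T ∈ unitaryGroup (Fin n → Fin 2) ℂ :=
  kron_mem_unitaryGroup fun k => by
    split_ifs
    exacts [sx_mem_unitaryGroup, one_mem _]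

theorem pauliZString_mulVec_indicator {T : Finset (Fin n)} {S : Finset (Fin n → Fin 2)}
    (hS : ∀ w ∈ S, Even (∑ k ∈ T, (w k : ℕ))) (c : ℂ) :
    pauliZString T *ᵥ (fun f => if f ∈ S then c else 0) = fun f => if f ∈ S then c else 0 := by
  ext f
  rw [pauliZString_mulVec]
  split_ifs with hf
  · rw [(hS f hf).neg_one_pow, one_mul]
  · rw [mul_zero]

theorem pauliXString_mulVec_indicator {T : Finset (Fin n)} {S : Finset (Fin n → Fin 2)}
    (hS : ∀ w ∈ S, flipOn T w ∈ S) (c : ℂ) :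
    pauliXString T *ᵥ (fun f => if f ∈ S then c else 0) = fun f => if f ∈ S then c else 0 := by
  ext f
  have hmem : flipOn T f ∈ S ↔ f ∈ S :=
    ⟨fun h => flipOn_involutive T f ▸ hS _ h, hS f⟩
  simp only [pauliXString_mulVec, Function.comp_apply, hmem]

end PauliString

-- Qubits are indexed from `0`: `A₁ = σ_z ⊗ σ_z ⊗ 1 ⊗ ⋯` acts on `{0, 1}`.
def toricStarSupport : Fin 6 → Finset (Fin 7) :=
  ![{0, 1}, {0, 2}, {1, 3, 4}, {2, 3, 5}, {4, 6}, {5, 6}]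

def toricPlaquetteSupport : Fin 2 → Finset (Fin 7) :=
  ![{0, 1, 2, 3}, {3, 4, 5, 6}]

theorem H7td_eq_pauliStrings : H7td =
    -(∑ i, pauliZString (toricStarSupport i)) - ∑ j, pauliXString (toricPlaquetteSupport j) := by
  rw [H7td, Fin.sum_univ_six, Fin.sum_univ_two]
  congr 6
  all_goals funext k; fin_cases k <;> rfl

def toricGroundSupport : Finset (Fin 7 → Fin 2) := {w₁, w₂, w₃, w₄}

theorem psi7_eq_indicator (c : ℝ) :
    psi7 c c c c = fun f => if f ∈ toricGroundSupport then (c : ℂ) else 0 := by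
  ext f
  have hne : w₁ ≠ w₂ ∧ w₁ ≠ w₃ ∧ w₁ ≠ w₄ ∧ w₂ ≠ w₃ ∧ w₂ ≠ w₄ ∧ w₃ ≠ w₄ := by decide
  simp only [psi7, toricGroundSupport, Finset.mem_insert, Finset.mem_singleton]
  split_ifs <;> simp_all

theorem even_sum_toricStarSupport :
    ∀ i, ∀ w ∈ toricGroundSupport, Even (∑ k ∈ toricStarSupport i, (w k : ℕ)) := by
  decide +kernel

theorem flipOn_toricPlaquetteSupport_mem :
    ∀ j, ∀ w ∈ toricGroundSupport, flipOn (toricPlaquetteSupport j) w ∈ toricGroundSupport := by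
  decide +kernel

/-- The seven-qubit state `|ψ⟩₇` with equal coefficients `1/2` is an eigenvector of
the toric-code Hamiltonian `H` with eigenvalue `−8`, and it is a ground state:
`Re⟪φ, Hφ⟫ ≥ −8‖φ‖²` for every `φ`. -/
theorem toric_code_ground_state :
    H7td.mulVec (psi7 (1/2) (1/2) (1/2) (1/2)) =
      (-8 : ℂ) • psi7 (1/2) (1/2) (1/2) (1/2) ∧
    ∀ φ : (Fin 7 → Fin 2) → ℂ,
      -8 * ∑ f, Complex.normSq (φ f) ≤ (star φ ⬝ᵥ H7td.mulVec φ).re := by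
  constructor
  · rw [H7td_eq_pauliStrings, psi7_eq_indicator, sub_mulVec, neg_mulVec, sum_mulVec,
      sum_mulVec]
    simp only [fun i => pauliZString_mulVec_indicator (even_sum_toricStarSupport i),
      fun j => pauliXString_mulVec_indicator (flipOn_toricPlaquetteSupport_mem j),
      Finset.sum_const, Finset.card_univ, Fintype.card_fin]
    module
  · intro φ
    have hZ := Finset.sum_le_sum fun i (_ : i ∈ Finset.univ) =>
      re_star_dotProduct_mulVec_le_of_mem_unitaryGroup
        (pauliZString_mem_unitaryGroup (toricStarSupport i)) φ
    have hX := Finset.sum_le_sum fun j (_ : j ∈ Finset.univ) =>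
      re_star_dotProduct_mulVec_le_of_mem_unitaryGroup
        (pauliXString_mem_unitaryGroup (toricPlaquetteSupport j)) φ
    simp only [Finset.sum_const, Finset.card_univ, Fintype.card_fin, nsmul_eq_mul,
      Nat.cast_ofNat] at hZ hX
    rw [H7td_eq_pauliStrings, sub_mulVec, neg_mulVec, sum_mulVec, sum_mulVec, dotProduct_sub,
      dotProduct_neg, dotProduct_sum, dotProduct_sum, Complex.sub_re, Complex.neg_re,
      Complex.re_sum, Complex.re_sum]
    linarith
end
end

section
/- For the seven-qubit state |ψ⟩₇ with equal coefficients α₁ = α₂ = α₃ = α₄ = 1/2, the reduced density matrix of every single qubit is maximally mixed: for each site k ∈ Fin 7, the 2×2 matrix ρ_{(k)}(a,a′) = ∑_{b : (Fin 7 \ {k}) → Fin 2} ρ(f_{b,a}, f_{b,a′}) equals (1/2)·I₂, where f_{b,a} denotes the bit string equal to b away from site k and equal to a at site k. Hence |ψ⟩₇ is maximally entangled across every bipartition separating one qubit from the other six. -/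
open Matrix Complex Polynomial
open scoped ComplexOrder

noncomputable section

private lemma key (k : Fin 7) (a a' : Fin 2) (v w : Fin 7 → Fin 2) (c d : ℂ) :
    (∑ b : {j : Fin 7 // j ≠ k} → Fin 2,
      (if (fun j => if h : j = k then a else b ⟨j, h⟩) = v then c else 0) *
      (if (fun j => if h : j = k then a' else b ⟨j, h⟩) = w then d else 0))
    = if v k = a ∧ w k = a' ∧ ∀ j : Fin 7, j ≠ k → v j = w j then c * d else 0 := by
  have hgen : ∀ (x : Fin 2) (u : Fin 7 → Fin 2) (b : {j : Fin 7 // j ≠ k} → Fin 2),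
      ((fun j => if h : j = k then x else b ⟨j, h⟩) = u) ↔
      (u k = x ∧ b = fun j => u j.1) := by
    intro x u b
    constructor
    · intro h
      refine ⟨?_, ?_⟩
      · rw [← congrFun h k]; simp
      · funext j
        have := congrFun h j.1
        rw [← this]; simp [j.2]
    · rintro ⟨h1, h2⟩
      funext j
      by_cases h : j = k
      · subst h; simp [h1]
      · simp [h, h2]
  by_cases h1 : v k = a
  · by_cases h2 : w k = a'
    · by_cases h3 : ∀ j : Fin 7, j ≠ k → v j = w j
      · have hvw : (fun j : {j : Fin 7 // j ≠ k} => v j.1) = fun j => w j.1 :=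
          funext fun j => h3 j.1 j.2
        simp only [hgen, h1, h2, true_and, ← hvw, ite_and, mul_ite, mul_zero, ite_mul, zero_mul,
          Finset.sum_ite_eq', Finset.mem_univ, if_true]
        rw [if_pos h3]
      · have hvw : (fun j : {j : Fin 7 // j ≠ k} => v j.1) ≠ fun j => w j.1 := by
          intro h
          exact h3 fun j hj => congrFun h ⟨j, hj⟩
        simp only [hgen, h1, h2, h3, and_false, if_false, true_and, ite_and]
        refine Finset.sum_eq_zero fun b _ => ?_
        by_cases hb : b = fun j => v j.1
        · have : b ≠ fun j => w j.1 := by rw [hb]; exact hvw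
          simp [this]
        · simp [hb]
    · simp [hgen, h2]
  · simp [hgen, h1]

/-- For the seven-qubit state `|ψ⟩₇` with equal coefficients `1/2`, the reduced
density matrix of every single qubit `k` (partial trace over the other six qubits)
is maximally mixed, i.e. equal to `(1/2)·I₂`: the state is maximally entangled
across every bipartition separating one qubit from the other six. -/
theorem rho_single_site_maximally_mixed (k : Fin 7)
    (ρk : Matrix (Fin 2) (Fin 2) ℂ)
    (hρk : ρk = Matrix.of fun a a' =>
      ∑ b : {j : Fin 7 // j ≠ k} → Fin 2,
        rho7 (1/2) (1/2) (1/2) (1/2)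
          (fun j => if h : j = k then a else b ⟨j, h⟩)
          (fun j => if h : j = k then a' else b ⟨j, h⟩)) :
    ρk = (1/2 : ℂ) • (1 : Matrix (Fin 2) (Fin 2) ℂ) := by
  subst hρk
  ext a a'
  simp only [Matrix.of_apply, rho7, psi7, map_add, apply_ite (starRingEnd ℂ), map_zero,
    Complex.conj_ofReal, add_mul, mul_add, Finset.sum_add_distrib, key,
    Matrix.smul_apply, Matrix.one_apply, smul_eq_mul]
  fin_cases k <;> fin_cases a <;> fin_cases a' <;>
    simp (config := { decide := true }) [w₁, w₂, w₃, w₄] <;> norm_num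
end
end

section
/- Let C₁, C_A ∈ [0,1] satisfy the constraint 1 − 2√(1 − C₁²) − √(1 − C_A²) = 0, and let C₂, C₂′ ∈ [0,1] be any two values for which the parametrization (with p = √(1−C₁²), q = √(1−C₂²) resp. q′ = √(1−C₂′²), r = √(1−C_A²)): α₁² = (1−p)/2, α₂² = (1−q)/2, α₃² = (p+r)/2, α₄² = (q−r)/2 yields valid squared amplitudes in [0,1], and for which XX ≥ ZZ where XX = 16(α₁²+α₃²)(α₂²+α₄²) + 48(α₁²α₄² + α₂²α₃²) and ZZ = 1 + 32α₁²α₃² + 32α₂²α₄². Then the upper bound of the maximum violation of Bell's inequality 2√(2·XX) takes the same value for C₂ and for C₂′; indeed under the constraint one has α₁²α₄² + α₂²α₃² = p(1−p)/2 and (α₁²+α₃²)(α₂²+α₄²) = (1−r²)/4, both independent of C₂. -/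
noncomputable section

/-- Under the constraint `1 − 2√(1−C₁²) − √(1−C_A²) = 0` (and `R_xx ≥ R_zz`), the
upper bound `2√(2·XX)` of the maximum violation of Bell's inequality for the
seven-qubit state is independent of `C₂`: for any two admissible values `C₂, C₂′`
the bound takes the same value; indeed `α₁²α₄² + α₂²α₃² = p(1−p)/2` and
`(α₁²+α₃²)(α₂²+α₄²) = (1−r²)/4`, both independent of `C₂`. -/
theorem bound_independent_of_C₂ (C₁ C₂ C₂' C_A : ℝ)
    (hC₁ : C₁ ∈ Set.Icc (0 : ℝ) 1) (hC₂ : C₂ ∈ Set.Icc (0 : ℝ) 1)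
    (hC₂' : C₂' ∈ Set.Icc (0 : ℝ) 1) (hCA : C_A ∈ Set.Icc (0 : ℝ) 1)
    (p q q' r : ℝ)
    (hp : p = Real.sqrt (1 - C₁ ^ 2)) (hq : q = Real.sqrt (1 - C₂ ^ 2))
    (hq' : q' = Real.sqrt (1 - C₂' ^ 2)) (hr : r = Real.sqrt (1 - C_A ^ 2))
    (hconstraint : 1 - 2 * p - r = 0)
    -- squared amplitudes built from C₁, C₂, C_A:
    (a₁ a₂ a₃ a₄ : ℝ)
    (ha₁ : a₁ = (1 - p) / 2) (ha₂ : a₂ = (1 - q) / 2)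
    (ha₃ : a₃ = (p + r) / 2) (ha₄ : a₄ = (q - r) / 2)
    -- squared amplitudes built from C₁, C₂′, C_A:
    (b₁ b₂ b₃ b₄ : ℝ)
    (hb₁ : b₁ = (1 - p) / 2) (hb₂ : b₂ = (1 - q') / 2)
    (hb₃ : b₃ = (p + r) / 2) (hb₄ : b₄ = (q' - r) / 2)
    -- validity of the squared amplitudes:
    (haI : a₁ ∈ Set.Icc (0:ℝ) 1 ∧ a₂ ∈ Set.Icc (0:ℝ) 1 ∧
           a₃ ∈ Set.Icc (0:ℝ) 1 ∧ a₄ ∈ Set.Icc (0:ℝ) 1)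
    (hbI : b₁ ∈ Set.Icc (0:ℝ) 1 ∧ b₂ ∈ Set.Icc (0:ℝ) 1 ∧
           b₃ ∈ Set.Icc (0:ℝ) 1 ∧ b₄ ∈ Set.Icc (0:ℝ) 1)
    (XX ZZ XX' ZZ' : ℝ)
    (hXX : XX = 16 * (a₁ + a₃) * (a₂ + a₄) + 48 * (a₁ * a₄ + a₂ * a₃))
    (hZZ : ZZ = 1 + 32 * a₁ * a₃ + 32 * a₂ * a₄)
    (hXX' : XX' = 16 * (b₁ + b₃) * (b₂ + b₄) + 48 * (b₁ * b₄ + b₂ * b₃))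
    (hZZ' : ZZ' = 1 + 32 * b₁ * b₃ + 32 * b₂ * b₄)
    (hge : ZZ ≤ XX) (hge' : ZZ' ≤ XX') :
    2 * Real.sqrt (2 * XX) = 2 * Real.sqrt (2 * XX') ∧
    a₁ * a₄ + a₂ * a₃ = p * (1 - p) / 2 ∧
    b₁ * b₄ + b₂ * b₃ = p * (1 - p) / 2 ∧
    (a₁ + a₃) * (a₂ + a₄) = (1 - r ^ 2) / 4 ∧
    (b₁ + b₃) * (b₂ + b₄) = (1 - r ^ 2) / 4 := by
  have hr' : r = 1 - 2 * p := by linarith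
  subst ha₁ ha₂ ha₃ ha₄ hb₁ hb₂ hb₃ hb₄ hXX hXX'
  refine ⟨?_, ?_, ?_, ?_, ?_⟩
  · congr 1
    subst hr'; ring
  all_goals subst hr'; ring
end
end

section
/- Let C₂, C_A ∈ [0,1] satisfy the constraint 1 − 2√(1 − C₂²) + √(1 − C_A²) = 0, and let C₁, C₁′ ∈ [0,1] be any two values for which the parametrization (with p = √(1−C₁²) resp. p′ = √(1−C₁′²), q = √(1−C₂²), r = √(1−C_A²)): α₁² = (1−p)/2, α₂² = (1−q)/2, α₃² = (p+r)/2, α₄² = (q−r)/2 yields valid squared amplitudes in [0,1], and for which XX ≥ ZZ where XX = 16(α₁²+α₃²)(α₂²+α₄²) + 48(α₁²α₄² + α₂²α₃²) and ZZ = 1 + 32α₁²α₃² + 32α₂²α₄². Then the upper bound of the maximum violation of Bell's inequality 2√(2·XX) takes the same value for C₁ and for C₁′; indeed under the constraint one has α₁²α₄² + α₂²α₃² = q(1−q)/2 and (α₁²+α₃²)(α₂²+α₄²) = (1−r²)/4, both independent of C₁. -/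
noncomputable section

/-- Under the constraint `1 − 2√(1−C₂²) + √(1−C_A²) = 0` (and `R_xx ≥ R_zz`), the
upper bound `2√(2·XX)` of the maximum violation of Bell's inequality for the
seven-qubit state is independent of `C₁`: for any two admissible values `C₁, C₁′`
the bound takes the same value; indeed `α₁²α₄² + α₂²α₃² = q(1−q)/2` and
`(α₁²+α₃²)(α₂²+α₄²) = (1−r²)/4`, both independent of `C₁`. -/
theorem bound_independent_of_C₁ (C₁ C₁' C₂ C_A : ℝ)
    (hC₁ : C₁ ∈ Set.Icc (0 : ℝ) 1) (hC₁' : C₁' ∈ Set.Icc (0 : ℝ) 1)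
    (hC₂ : C₂ ∈ Set.Icc (0 : ℝ) 1) (hCA : C_A ∈ Set.Icc (0 : ℝ) 1)
    (p p' q r : ℝ)
    (hp : p = Real.sqrt (1 - C₁ ^ 2)) (hp' : p' = Real.sqrt (1 - C₁' ^ 2))
    (hq : q = Real.sqrt (1 - C₂ ^ 2)) (hr : r = Real.sqrt (1 - C_A ^ 2))
    (hconstraint : 1 - 2 * q + r = 0)
    -- squared amplitudes built from C₁, C₂, C_A:
    (a₁ a₂ a₃ a₄ : ℝ)
    (ha₁ : a₁ = (1 - p) / 2) (ha₂ : a₂ = (1 - q) / 2)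
    (ha₃ : a₃ = (p + r) / 2) (ha₄ : a₄ = (q - r) / 2)
    -- squared amplitudes built from C₁′, C₂, C_A:
    (b₁ b₂ b₃ b₄ : ℝ)
    (hb₁ : b₁ = (1 - p') / 2) (hb₂ : b₂ = (1 - q) / 2)
    (hb₃ : b₃ = (p' + r) / 2) (hb₄ : b₄ = (q - r) / 2)
    -- validity of the squared amplitudes:
    (haI : a₁ ∈ Set.Icc (0:ℝ) 1 ∧ a₂ ∈ Set.Icc (0:ℝ) 1 ∧
           a₃ ∈ Set.Icc (0:ℝ) 1 ∧ a₄ ∈ Set.Icc (0:ℝ) 1)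
    (hbI : b₁ ∈ Set.Icc (0:ℝ) 1 ∧ b₂ ∈ Set.Icc (0:ℝ) 1 ∧
           b₃ ∈ Set.Icc (0:ℝ) 1 ∧ b₄ ∈ Set.Icc (0:ℝ) 1)
    (XX ZZ XX' ZZ' : ℝ)
    (hXX : XX = 16 * (a₁ + a₃) * (a₂ + a₄) + 48 * (a₁ * a₄ + a₂ * a₃))
    (hZZ : ZZ = 1 + 32 * a₁ * a₃ + 32 * a₂ * a₄)
    (hXX' : XX' = 16 * (b₁ + b₃) * (b₂ + b₄) + 48 * (b₁ * b₄ + b₂ * b₃))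
    (hZZ' : ZZ' = 1 + 32 * b₁ * b₃ + 32 * b₂ * b₄)
    (hge : ZZ ≤ XX) (hge' : ZZ' ≤ XX') :
    2 * Real.sqrt (2 * XX) = 2 * Real.sqrt (2 * XX') ∧
    a₁ * a₄ + a₂ * a₃ = q * (1 - q) / 2 ∧
    b₁ * b₄ + b₂ * b₃ = q * (1 - q) / 2 ∧
    (a₁ + a₃) * (a₂ + a₄) = (1 - r ^ 2) / 4 ∧
    (b₁ + b₃) * (b₂ + b₄) = (1 - r ^ 2) / 4 := by
  have hrq : r = 2 * q - 1 := by linarith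
  subst ha₁ ha₂ ha₃ ha₄ hb₁ hb₂ hb₃ hb₄ hXX hXX' hrq
  refine ⟨by ring_nf, by ring, by ring, by ring, by ring⟩
end
end
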